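/- arXiv:2511.05088 — 5 statements merged into one kernel-verified Lean document; each statement's English description precedes it below -/
import Mathlib

section
/- Let t ≤ s be positive integers. A t × s complex matrix K satisfies J_t(0) K = -K J_s(0) if and only if K = [0 K̂], where 0 is the t × (s−t) zero matrix and K̂ is the t × t upper-triangular matrix whose (i,j) entry equals (−1)^{i−1} k_{j−i+1} for i ≤ j and 0 for i > j, for some arbitrary complex numbers k_1, …, k_t. -/
/-- The `t × t` Jordan block with eigenvalue `l`. -/
def JordanBlock (t : ℕ) (l : ℂ) : Matrix (Fin t) (Fin t) ℂ :=
  Matrix.of fun i j => if (j : ℕ) = i then l else if (j : ℕ) = (i : ℕ) + 1 then 1 else 0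

lemma JordanBlock_zero_apply {t : ℕ} (i m : Fin t) :
    JordanBlock t 0 i m = if ((m : ℕ) = (i : ℕ) + 1) then 1 else 0 := by
  simp only [JordanBlock, Matrix.of_apply]
  split_ifs with h1 h2 <;> first | rfl | omega

lemma J_mul {t s : ℕ} (K : Matrix (Fin t) (Fin s) ℂ) (i : Fin t) (j : Fin s) :
    (JordanBlock t 0 * K) i j =
      if h : (i : ℕ) + 1 < t then K ⟨(i : ℕ) + 1, h⟩ j else 0 := by
  rw [Matrix.mul_apply]
  simp only [JordanBlock_zero_apply, ite_mul, one_mul, zero_mul]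
  split_ifs with h
  · rw [Finset.sum_eq_single (⟨(i : ℕ) + 1, h⟩ : Fin t)]
    · rw [if_pos rfl]
    · intro m _ hm
      rw [if_neg]
      intro hme
      exact hm (Fin.ext hme)
    · intro hmem; exact absurd (Finset.mem_univ _) hmem
  · apply Finset.sum_eq_zero
    intro m _
    rw [if_neg]
    have := m.isLt
    omega

lemma mul_J {t s : ℕ} (K : Matrix (Fin t) (Fin s) ℂ) (i : Fin t) (j : Fin s) :
    (K * JordanBlock s 0) i j =
      if h : 0 < (j : ℕ) then K i ⟨(j : ℕ) - 1, by omega⟩ else 0 := by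
  rw [Matrix.mul_apply]
  simp only [JordanBlock_zero_apply, mul_ite, mul_one, mul_zero]
  split_ifs with h
  · have hlt : (j : ℕ) - 1 < s := by have := j.isLt; omega
    rw [Finset.sum_eq_single (⟨(j : ℕ) - 1, hlt⟩ : Fin s)]
    · rw [if_pos (by simp; omega)]
    · intro m _ hm
      rw [if_neg]
      intro hme
      apply hm
      apply Fin.ext
      simp only
      omega
    · intro hmem; exact absurd (Finset.mem_univ _) hmem
  · apply Finset.sum_eq_zero
    intro m _
    rw [if_neg]
    omega

/-- `K` is of the form `[0  K̂]` with `K̂` the `t × t` upper-triangular matrix with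
entries `K̂_{ij} = (−1)^{i−1} k_{j−i+1}` (1-indexed) for `i ≤ j` and `0` otherwise. -/
theorem stmt_3 (t s : ℕ) (ht : 0 < t) (hts : t ≤ s) (K : Matrix (Fin t) (Fin s) ℂ) :
    JordanBlock t 0 * K = -(K * JordanBlock s 0) ↔
      ∃ k : ℕ → ℂ, ∀ (i : Fin t) (j : Fin s),
        K i j = if (s - t) + (i : ℕ) ≤ (j : ℕ) then
            (-1 : ℂ) ^ (i : ℕ) * k ((j : ℕ) - ((s - t) + (i : ℕ)))
          else 0 := by
  constructor
  · intro H
    have H' : ∀ (i : Fin t) (j : Fin s),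
        (if h : (i : ℕ) + 1 < t then K ⟨(i : ℕ) + 1, h⟩ j else 0) =
          -(if h : 0 < (j : ℕ) then K i ⟨(j : ℕ) - 1, by omega⟩ else 0) := by
      intro i j
      have := congrFun (congrFun H i) j
      rwa [J_mul, Matrix.neg_apply, mul_J] at this
    -- recursion: K_{i+1,j+1} = -K_{i,j}
    have claim2 : ∀ (i : Fin t) (j : Fin s) (hi : (i : ℕ) + 1 < t) (hj : (j : ℕ) + 1 < s),
        K ⟨(i : ℕ) + 1, hi⟩ ⟨(j : ℕ) + 1, hj⟩ = -K i j := by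
      intro i j hi hj
      have h0 := H' i ⟨(j : ℕ) + 1, hj⟩
      rw [dif_pos hi, dif_pos (show 0 < (((⟨(j : ℕ) + 1, hj⟩ : Fin s) : ℕ)) from
        Nat.succ_pos _)] at h0
      have he : (⟨((((⟨(j : ℕ) + 1, hj⟩ : Fin s)) : ℕ)) - 1, by omega⟩ : Fin s) = j := by
        apply Fin.ext; simp
      rwa [he] at h0
    -- last row vanishes except possibly last entry
    have claim1 : ∀ (i : Fin t) (j : Fin s), ¬((i : ℕ) + 1 < t) → (j : ℕ) + 1 < s →
        K i j = 0 := by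
      intro i j hi hj
      have h0 := H' i ⟨(j : ℕ) + 1, hj⟩
      rw [dif_neg hi, dif_pos (show 0 < (((⟨(j : ℕ) + 1, hj⟩ : Fin s) : ℕ)) from
        Nat.succ_pos _)] at h0
      have he : (⟨((((⟨(j : ℕ) + 1, hj⟩ : Fin s)) : ℕ)) - 1, by omega⟩ : Fin s) = j := by
        apply Fin.ext; simp
      rw [he] at h0
      exact neg_eq_zero.mp h0.symm
    -- diagonal shift
    have shift : ∀ (m : ℕ) (i : Fin t) (j : Fin s) (h1 : (i : ℕ) + m < t)
        (h2 : (j : ℕ) + m < s),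
        K i j = (-1 : ℂ) ^ m * K ⟨(i : ℕ) + m, h1⟩ ⟨(j : ℕ) + m, h2⟩ := by
      intro m
      induction m with
      | zero =>
        intro i j h1 h2
        simp
      | succ m ih =>
        intro i j h1 h2
        have hi1 : (i : ℕ) + 1 < t := by omega
        have hj1 : (j : ℕ) + 1 < s := by omega
        have step := claim2 i j hi1 hj1
        have h1' : ((⟨(i : ℕ) + 1, hi1⟩ : Fin t) : ℕ) + m < t := by simp; omega
        have h2' : ((⟨(j : ℕ) + 1, hj1⟩ : Fin s) : ℕ) + m < s := by simp; omega
        have := ih (⟨(i : ℕ) + 1, hi1⟩ : Fin t) (⟨(j : ℕ) + 1, hj1⟩ : Fin s) h1' h2'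
        rw [this] at step
        have e1 : (⟨((⟨(i : ℕ) + 1, hi1⟩ : Fin t) : ℕ) + m, h1'⟩ : Fin t) =
            ⟨(i : ℕ) + (m + 1), h1⟩ := by apply Fin.ext; simp; omega
        have e2 : (⟨((⟨(j : ℕ) + 1, hj1⟩ : Fin s) : ℕ) + m, h2'⟩ : Fin s) =
            ⟨(j : ℕ) + (m + 1), h2⟩ := by apply Fin.ext; simp; omega
        rw [e1, e2] at step
        have := step.symm
        rw [neg_eq_iff_eq_neg] at this
        rw [this, pow_succ]
        ring
    -- entries strictly left of the "diagonal band" vanish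
    have Z : ∀ (i : Fin t) (j : Fin s), (j : ℕ) < s - t + (i : ℕ) → K i j = 0 := by
      intro i j hlt
      have hi := i.isLt
      have hj := j.isLt
      set m := t - 1 - (i : ℕ) with hm
      have h1 : (i : ℕ) + m < t := by omega
      have h2 : (j : ℕ) + m < s := by omega
      rw [shift m i j h1 h2]
      rw [claim1 _ _ (by simp; omega) (by simp; omega)]
      ring
    refine ⟨fun n => if h : s - t + n < s then K ⟨0, ht⟩ ⟨s - t + n, h⟩ else 0, ?_⟩
    intro i j
    have hi := i.isLt
    have hj := j.isLt
    by_cases hc : s - t + (i : ℕ) ≤ (j : ℕ)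
    · rw [if_pos hc]
      have hn : s - t + ((j : ℕ) - (s - t + (i : ℕ))) < s := by omega
      simp only [dif_pos hn]
      have h1 : ((⟨0, ht⟩ : Fin t) : ℕ) + (i : ℕ) < t := by simp
      have h2 : ((⟨s - t + ((j : ℕ) - (s - t + (i : ℕ))), hn⟩ : Fin s) : ℕ) + (i : ℕ) < s := by
        simp; omega
      have hs := shift (i : ℕ) ⟨0, ht⟩ ⟨s - t + ((j : ℕ) - (s - t + (i : ℕ))), hn⟩ h1 h2
      have e1 : (⟨((⟨0, ht⟩ : Fin t) : ℕ) + (i : ℕ), h1⟩ : Fin t) = i := by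
        apply Fin.ext; simp
      have e2 : (⟨((⟨s - t + ((j : ℕ) - (s - t + (i : ℕ))), hn⟩ : Fin s) : ℕ) + (i : ℕ), h2⟩ :
          Fin s) = j := by apply Fin.ext; simp; omega
      rw [e1, e2] at hs
      rw [hs, ← mul_assoc, ← pow_add]
      rw [Even.neg_one_pow ⟨(i : ℕ), rfl⟩, one_mul]
    · rw [if_neg hc]
      exact Z i j (by omega)
  · rintro ⟨k, hk⟩
    apply Matrix.ext
    intro i j
    rw [J_mul, Matrix.neg_apply, mul_J]
    have hi := i.isLt
    have hj := j.isLt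
    split_ifs with h1 h2
    · rw [hk, hk]
      simp only
      split_ifs with h3 h4
      · have he : (j : ℕ) - (s - t + ((i : ℕ) + 1)) = (j : ℕ) - 1 - (s - t + (i : ℕ)) := by
          omega
        rw [he, pow_succ]
        ring
      · omega
      · omega
      · rw [neg_zero]
    · rw [hk]
      simp only
      rw [if_neg (by omega), neg_zero]
    · rw [hk]
      simp only
      rw [if_neg (by omega), neg_zero]
    · rw [neg_zero]
end

section
/- Let λ be a nonzero complex number and J = J_n(λ) an n × n Jordan block. Then K = 0 is the only n × n matrix satisfying both J K J = K J K and J K = −K J. -/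
lemma JordanBlock_det (t : ℕ) (l : ℂ) : (JordanBlock t l).det = l ^ t := by
  have h : (JordanBlock t l).BlockTriangular id := by
    intro i j hij
    simp only [id] at hij
    simp only [JordanBlock, Matrix.of_apply]
    rw [Fin.lt_def] at hij
    split_ifs with h h' <;> first | omega | rfl
  rw [Matrix.det_of_upperTriangular h]
  have : ∀ i : Fin t, JordanBlock t l i i = l := by
    intro i; simp [JordanBlock]
  simp [this]

theorem stmt_12 (n : ℕ) (l : ℂ) (hl : l ≠ 0) (K : Matrix (Fin n) (Fin n) ℂ)
    (h1 : JordanBlock n l * K * JordanBlock n l = K * JordanBlock n l * K)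
    (h2 : JordanBlock n l * K = -(K * JordanBlock n l)) : K = 0 := by
  set J := JordanBlock n l with hJ
  have hdet : IsUnit J.det := by
    rw [hJ, JordanBlock_det]
    exact (isUnit_iff_ne_zero.mpr (pow_ne_zero n hl))
  have hinv : J * J⁻¹ = 1 := Matrix.mul_nonsing_inv J hdet
  have hinv' : J⁻¹ * J = 1 := Matrix.nonsing_inv_mul J hdet
  have h2' : K * J = -(J * K) := by rw [h2, neg_neg]
  -- LHS of h1 equals -(K*J*J)
  have a1 : J * K * J = -(K * J * J) := by rw [h2, neg_mul]
  -- RHS of h1 equals -(K*K*J)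
  have a2 : K * J * K = -(K * K * J) := by
    rw [mul_assoc, h2, mul_neg, ← mul_assoc]
  -- RHS of h1 also equals -(J*K*K)
  have a3 : K * J * K = -(J * K * K) := by rw [h2', neg_mul]
  -- J*J*K = K*J*J
  have a4 : J * J * K = K * J * J := by
    rw [mul_assoc, h2, mul_neg, ← mul_assoc, a1, neg_neg]
  have e1 : K * J * J = K * K * J := by
    have := h1; rw [a1, a2] at this; exact neg_inj.mp this
  have e2 : J * J * K = J * K * K := by
    have := h1; rw [a1, a3] at this
    rw [a4]; exact neg_inj.mp this
  -- cancel J on the right in e1 : K*J = K*K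
  have c1 : K * J = K * K := by
    have := congrArg (· * J⁻¹) e1
    simpa [mul_assoc, hinv] using this
  -- cancel J on the left in e2 : J*K = K*K
  have c2 : J * K = K * K := by
    have := congrArg (J⁻¹ * ·) e2
    simpa [← mul_assoc, hinv'] using this
  have hz : K * J = 0 := by
    have : K * J = -(K * J) := by
      calc K * J = K * K := c1
        _ = J * K := c2.symm
        _ = -(K * J) := h2
    have h2smul : (2 : ℂ) • (K * J) = 0 := by
      rw [two_smul]
      rw [eq_neg_iff_add_eq_zero] at this
      exact this
    have := smul_eq_zero.mp h2smul
    rcases this with h | h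
    · exact absurd h two_ne_zero
    · exact h
  calc K = K * J * J⁻¹ := by rw [mul_assoc, hinv, mul_one]
    _ = 0 := by rw [hz, zero_mul]
end

section
/- Let J be an invertible n × n complex matrix (e.g., an invertible Jordan form). Then K = 0 is the only n × n matrix satisfying both J K J = K J K and J K = −K J. -/
theorem stmt_14 (n : ℕ) (J : Matrix (Fin n) (Fin n) ℂ) (hJ : IsUnit J)
    (K : Matrix (Fin n) (Fin n) ℂ)
    (h1 : J * K * J = K * J * K) (h2 : J * K = -(K * J)) : K = 0 := by
  have hKJ : K * J = -(J * K) := by rw [h2, neg_neg]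
  -- Step 1: J * K = K * K
  have e1 : J * (J * K) = J * (K * K) := by
    have lhs : J * K * J = -(J * (J * K)) := by
      rw [mul_assoc, hKJ, mul_neg]
    have rhs : K * J * K = -(J * (K * K)) := by
      rw [hKJ, neg_mul, mul_assoc]
    have := lhs.symm.trans (h1.trans rhs)
    exact neg_injective this
  have hJK2 : J * K = K * K := hJ.mul_left_cancel e1
  -- Step 2: K^3 = -K^3, hence K^3 = 0
  have hneg : K * (K * K) = -(K * (K * K)) := by
    calc K * (K * K) = K * (J * K) := by rw [← hJK2]
      _ = K * J * K := by rw [← mul_assoc]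
      _ = -(J * K) * K := by rw [hKJ]
      _ = -(J * K * K) := by rw [neg_mul]
      _ = -(K * K * K) := by rw [hJK2]
      _ = -(K * (K * K)) := by rw [mul_assoc]
  have h2a : (2 : ℂ) • (K * (K * K)) = 0 := by
    rw [two_smul]
    exact add_eq_zero_iff_eq_neg.mpr hneg
  have hK3 : K * (K * K) = 0 := by
    rcases smul_eq_zero.mp h2a with h | h
    · norm_num at h
    · exact h
  -- Step 3: J * (J * K) = 0, cancel J twice
  have e2 : J * (J * K) = J * (J * 0) := by
    calc J * (J * K) = J * (K * K) := by rw [hJK2]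
      _ = J * K * K := by rw [mul_assoc]
      _ = K * (K * K) := by rw [hJK2, mul_assoc]
      _ = 0 := hK3
      _ = J * (J * 0) := by rw [mul_zero, mul_zero]
  exact hJ.mul_left_cancel (hJ.mul_left_cancel e2)
end

section
/- Let A be an invertible n × n complex matrix. Then the zero matrix is the only n × n matrix B satisfying A B A = B A B and A B = −B A. -/
theorem stmt_15 (n : ℕ) (A : Matrix (Fin n) (Fin n) ℂ) (hA : IsUnit A)
    (B : Matrix (Fin n) (Fin n) ℂ)
    (h1 : A * B * A = B * A * B) (h2 : A * B = -(B * A)) : B = 0 := by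
  have h2' : B * A = -(A * B) := by rw [h2, neg_neg]
  have e1 : B * A * A = B * B * A := by
    have : -(B * A * A) = -(B * B * A) := by
      calc -(B * A * A) = A * B * A := by rw [h2]; noncomm_ring
        _ = B * A * B := h1
        _ = B * (A * B) := by noncomm_ring
        _ = -(B * B * A) := by rw [h2]; noncomm_ring
    exact neg_injective this
  have e2 : A * (A * B) = A * (B * B) := by
    have : -(A * (A * B)) = -(A * (B * B)) := by
      calc -(A * (A * B)) = A * -(A * B) := by noncomm_ring
        _ = A * (B * A) := by rw [← h2']
        _ = A * B * A := by noncomm_ring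
        _ = B * A * B := h1
        _ = -(A * B) * B := by rw [h2']
        _ = -(A * (B * B)) := by noncomm_ring
    exact neg_injective this
  have c1 : B * A = B * B := hA.mul_right_cancel e1
  have c2 : A * B = B * B := hA.mul_left_cancel e2
  have key : B * A = -(B * A) := by
    calc B * A = B * B := c1
      _ = A * B := c2.symm
      _ = -(B * A) := h2
  have hsum : B * A + B * A = 0 := by
    nth_rewrite 2 [key]; simp
  have hz : B * A = 0 := by
    have h2s : (2 : ℂ) • (B * A) = 0 := by rw [two_smul]; exact hsum
    rcases smul_eq_zero.mp h2s with h | h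
    · norm_num at h
    · exact h
  have : B * A = 0 * A := by rw [hz, Matrix.zero_mul]
  exact hA.mul_right_cancel this
end

section
/- Let J = diag(J_0, J_1, J_2) where J_0 is nilpotent, J_1 and J_2 are invertible, no eigenvalue of J_1 is the negative of an eigenvalue of J_1, and the only pairs of eigenvalues of J summing to zero occur within J_0 or between J_1 and J_2. Then every matrix K satisfying J K = −K J and J K J = K J K has the form K = diag(K_1, 0, 0), where K_1 satisfies J_0 K_1 = −K_1 J_0 and K_1 (K_1 − J_0) J_0 = 0. -/
open Polynomial Matrix

variable {m l : Type*} [Fintype m] [Fintype l] [DecidableEq m] [DecidableEq l]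

lemma aux_nu_left (N : Matrix m m ℂ) (U : Matrix l l ℂ) (B : Matrix m l ℂ)
    (hN : IsNilpotent N) (hU : IsUnit U) (h : N * B = -(B * U)) : B = 0 := by
  obtain ⟨k, hk⟩ := hN
  have key : ∀ j : ℕ, N ^ j * B = ((-1 : ℂ) ^ j) • (B * U ^ j) := by
    intro j
    induction j with
    | zero => simp
    | succ j ih =>
      calc N ^ (j + 1) * B = N * (N ^ j * B) := by rw [pow_succ', Matrix.mul_assoc]
        _ = ((-1 : ℂ) ^ j) • (N * B * U ^ j) := by rw [ih, Matrix.mul_smul, Matrix.mul_assoc]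
        _ = ((-1 : ℂ) ^ j) • (-(B * (U * U ^ j))) := by rw [h, Matrix.neg_mul, Matrix.mul_assoc]
        _ = ((-1 : ℂ) ^ (j + 1)) • (B * U ^ (j + 1)) := by
              rw [← pow_succ', pow_succ (-1 : ℂ), mul_smul, neg_one_smul, smul_neg]
  have h0 := key k
  rw [hk, Matrix.zero_mul] at h0
  have hBU : B * U ^ k = 0 := by
    have hne : ((-1 : ℂ) ^ k) ≠ 0 := pow_ne_zero _ (by norm_num)
    rcases smul_eq_zero.mp h0.symm with h' | h'
    · exact absurd h' hne
    · exact h'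
  obtain ⟨u, hu⟩ := hU.pow k
  calc B = B * (U ^ k * ↑u⁻¹) := by rw [← hu, Units.mul_inv, Matrix.mul_one]
    _ = (B * U ^ k) * (↑u⁻¹ : Matrix l l ℂ) := by rw [Matrix.mul_assoc]
    _ = 0 := by rw [hBU, Matrix.zero_mul]

lemma aux_nu_right (N : Matrix m m ℂ) (U : Matrix l l ℂ) (C : Matrix l m ℂ)
    (hN : IsNilpotent N) (hU : IsUnit U) (h : U * C = -(C * N)) : C = 0 := by
  obtain ⟨k, hk⟩ := hN
  have hCN : C * N = -(U * C) := by rw [h, neg_neg]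
  have key : ∀ j : ℕ, C * N ^ j = ((-1 : ℂ) ^ j) • (U ^ j * C) := by
    intro j
    induction j with
    | zero => simp
    | succ j ih =>
      calc C * N ^ (j + 1) = (C * N ^ j) * N := by rw [pow_succ, Matrix.mul_assoc]
        _ = ((-1 : ℂ) ^ j) • (U ^ j * (C * N)) := by rw [ih, Matrix.smul_mul, Matrix.mul_assoc]
        _ = ((-1 : ℂ) ^ j) • (-(U ^ j * U * C)) := by
              rw [hCN, Matrix.mul_neg, ← Matrix.mul_assoc]
        _ = ((-1 : ℂ) ^ (j + 1)) • (U ^ (j + 1) * C) := by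
              rw [← pow_succ, pow_succ (-1 : ℂ), mul_smul, neg_one_smul, smul_neg]
  have h0 := key k
  rw [hk, Matrix.mul_zero] at h0
  have hUC : U ^ k * C = 0 := by
    have hne : ((-1 : ℂ) ^ k) ≠ 0 := pow_ne_zero _ (by norm_num)
    rcases smul_eq_zero.mp h0.symm with h' | h'
    · exact absurd h' hne
    · exact h'
  obtain ⟨u, hu⟩ := hU.pow k
  calc C = (↑u⁻¹ * U ^ k) * C := by rw [← hu, Units.inv_mul, Matrix.one_mul]
    _ = (↑u⁻¹ : Matrix l l ℂ) * (U ^ k * C) := by rw [Matrix.mul_assoc]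
    _ = 0 := by rw [hUC, Matrix.mul_zero]

lemma aux_unit_cancel (P : Matrix m m ℂ) (Q : Matrix l l ℂ) (X : Matrix m l ℂ)
    (hP : IsUnit P) (hQ : IsUnit Q) (h : P * X * Q = 0) : X = 0 := by
  obtain ⟨p, hp⟩ := hP
  obtain ⟨q, hq⟩ := hQ
  calc X = (↑p⁻¹ * P) * X * (Q * ↑q⁻¹) := by
        rw [← hp, ← hq, Units.inv_mul, Units.mul_inv, Matrix.one_mul, Matrix.mul_one]
    _ = (↑p⁻¹ : Matrix m m ℂ) * (P * X * Q) * (↑q⁻¹ : Matrix l l ℂ) := by simp only [Matrix.mul_assoc]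
    _ = 0 := by rw [h, Matrix.mul_zero, Matrix.zero_mul]

lemma aux_intertwine (A B X : Matrix m m ℂ) (h : A * X = X * B) (p : ℂ[X]) :
    (aeval A p) * X = X * (aeval B p) := by
  have hpow : ∀ j : ℕ, A ^ j * X = X * B ^ j := by
    intro j
    induction j with
    | zero => simp
    | succ j ih => rw [pow_succ', mul_assoc, ih, ← mul_assoc, h, pow_succ', mul_assoc]
  induction p using Polynomial.induction_on' with
  | add p q hp hq => simp [map_add, add_mul, mul_add, hp, hq]
  | monomial j a =>
    simp only [aeval_monomial]
    rw [mul_assoc, hpow j, ← mul_assoc]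
    simp [Algebra.algebraMap_eq_smul_one, Matrix.smul_mul, Matrix.mul_smul, mul_assoc]

lemma aux_root_mem_spectrum (A : Matrix m m ℂ) (r : ℂ) (hr : r ∈ (Matrix.charpoly A).roots) :
    r ∈ spectrum ℂ A := by
  have hroot : (Matrix.charpoly A).IsRoot r := (Polynomial.mem_roots (Matrix.charpoly_monic A).ne_zero).mp hr
  rw [spectrum.mem_iff]
  intro hunit
  have hev : Polynomial.eval r (Matrix.charpoly A) = (Matrix.scalar m r - A).det := by
    rw [Matrix.charpoly, eval_det, Matrix.matPolyEquiv_charmatrix]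
    simp
  have hdet : (Matrix.scalar m r - A).det = 0 := by rw [← hev]; exact hroot
  have : algebraMap ℂ (Matrix m m ℂ) r = Matrix.scalar m r := by
    ext i j; simp [Matrix.algebraMap_eq_diagonal, Matrix.scalar, Matrix.diagonal]
  rw [this] at hunit
  rw [Matrix.isUnit_iff_isUnit_det, hdet] at hunit
  exact (not_isUnit_zero hunit).elim

lemma aux_sylvester (A : Matrix m m ℂ)
    (hs : ∀ l ∈ spectrum ℂ A, ∀ m' ∈ spectrum ℂ A, l ≠ -m')
    (X : Matrix m m ℂ) (h : A * X = -(X * A)) : X = 0 := by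
  have h' : A * X = X * (-A) := by rw [h]; simp [Matrix.mul_neg]
  have key := aux_intertwine A (-A) X h' (Matrix.charpoly A)
  rw [Matrix.aeval_self_charpoly, zero_mul] at key
  -- show aeval (-A) (charpoly A) is a unit
  have hsplit := (IsAlgClosed.splits _).eq_prod_roots_of_monic (Matrix.charpoly_monic A)
  have hunit : ∀ s : Multiset ℂ, (∀ r ∈ s, r ∈ spectrum ℂ A) →
      IsUnit (aeval (-A) (Multiset.map (fun a => Polynomial.X - Polynomial.C a) s).prod) := by
    intro s
    induction s using Multiset.induction_on with
    | empty => intro _; simp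
    | cons a s ih =>
      intro hmem
      rw [Multiset.map_cons, Multiset.prod_cons, _root_.map_mul]
      refine IsUnit.mul ?_ (ih fun r hr => hmem r (Multiset.mem_cons_of_mem hr))
      have ha : a ∈ spectrum ℂ A := hmem a (Multiset.mem_cons_self a s)
      have hna : -a ∉ spectrum ℂ A := by
        intro hna
        exact hs (-a) hna a ha rfl
      have := spectrum.notMem_iff.mp hna
      have heq : aeval (-A) (Polynomial.X - Polynomial.C a) = algebraMap ℂ (Matrix m m ℂ) (-a) - A := by
        simp [map_sub, aeval_X, aeval_C, sub_eq_add_neg, add_comm]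
      rw [heq]
      exact this
  have hu : IsUnit (aeval (-A) (Matrix.charpoly A)) := by
    rw [hsplit] at key ⊢
    exact hunit _ fun r hr => aux_root_mem_spectrum A r hr
  obtain ⟨u, hu'⟩ := hu
  calc X = X * (aeval (-A) (Matrix.charpoly A) * ↑u⁻¹) := by rw [← hu', Units.mul_inv, mul_one]
    _ = (X * aeval (-A) (Matrix.charpoly A)) * ↑u⁻¹ := by rw [mul_assoc]
    _ = 0 := by rw [← key, zero_mul]



theorem stmt_18 (n0 n1 n2 : ℕ)
    (J0 : Matrix (Fin n0) (Fin n0) ℂ) (J1 : Matrix (Fin n1) (Fin n1) ℂ)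
    (J2 : Matrix (Fin n2) (Fin n2) ℂ)
    (hJ0 : IsNilpotent J0) (hJ1 : IsUnit J1) (hJ2 : IsUnit J2)
    (hs1 : ∀ l ∈ spectrum ℂ J1, ∀ m ∈ spectrum ℂ J1, l ≠ -m)
    (hs2 : ∀ l ∈ spectrum ℂ J2, ∀ m ∈ spectrum ℂ J2, l ≠ -m)
    (J : Matrix (Fin n0 ⊕ (Fin n1 ⊕ Fin n2)) (Fin n0 ⊕ (Fin n1 ⊕ Fin n2)) ℂ)
    (hJ : J = Matrix.fromBlocks J0 0 0 (Matrix.fromBlocks J1 0 0 J2))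
    (K : Matrix (Fin n0 ⊕ (Fin n1 ⊕ Fin n2)) (Fin n0 ⊕ (Fin n1 ⊕ Fin n2)) ℂ)
    (hac : J * K = -(K * J)) (hyb : J * K * J = K * J * K) :
    (∀ (a : Fin n0) (b : Fin n1 ⊕ Fin n2), K (Sum.inl a) (Sum.inr b) = 0) ∧
    (∀ (a : Fin n1 ⊕ Fin n2) (b : Fin n0), K (Sum.inr a) (Sum.inl b) = 0) ∧
    (∀ a b : Fin n1 ⊕ Fin n2, K (Sum.inr a) (Sum.inr b) = 0) ∧
    (J0 * Matrix.of (fun a b => K (Sum.inl a) (Sum.inl b)) =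
      -(Matrix.of (fun a b => K (Sum.inl a) (Sum.inl b)) * J0)) ∧
    Matrix.of (fun a b => K (Sum.inl a) (Sum.inl b)) *
        (Matrix.of (fun a b => K (Sum.inl a) (Sum.inl b)) - J0) * J0 = 0 := by
  subst hJ
  set J' : Matrix (Fin n1 ⊕ Fin n2) (Fin n1 ⊕ Fin n2) ℂ := Matrix.fromBlocks J1 0 0 J2 with hJ'
  have hJ'u : IsUnit J' := by
    rw [Matrix.isUnit_iff_isUnit_det, hJ', Matrix.det_fromBlocks_zero₂₁]
    exact ((Matrix.isUnit_iff_isUnit_det J1).mp hJ1).mul ((Matrix.isUnit_iff_isUnit_det J2).mp hJ2)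
  set A := K.toBlocks₁₁ with hAdef
  set B := K.toBlocks₁₂ with hBdef
  set C := K.toBlocks₂₁ with hCdef
  set D := K.toBlocks₂₂ with hDdef
  have hK : K = Matrix.fromBlocks A B C D := (Matrix.fromBlocks_toBlocks K).symm
  rw [hK] at hac hyb
  simp only [Matrix.fromBlocks_multiply, Matrix.zero_mul, Matrix.mul_zero, add_zero, zero_add,
    Matrix.fromBlocks_neg] at hac
  obtain ⟨h11, h12, h21, h22⟩ := Matrix.fromBlocks_inj.mp hac
  have hB : B = 0 := aux_nu_left J0 J' B hJ0 hJ'u h12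
  have hC : C = 0 := aux_nu_right J0 J' C hJ0 hJ'u h21
  rw [hB, hC] at hyb
  simp only [Matrix.fromBlocks_multiply, Matrix.zero_mul, Matrix.mul_zero, add_zero, zero_add,
    Matrix.mul_zero, Matrix.zero_mul] at hyb
  obtain ⟨y11, -, -, y22⟩ := Matrix.fromBlocks_inj.mp hyb
  -- split D into blocks
  set E11 := D.toBlocks₁₁ with hE11def
  set E12 := D.toBlocks₁₂ with hE12def
  set E21 := D.toBlocks₂₁ with hE21def
  set E22 := D.toBlocks₂₂ with hE22def
  have hD : D = Matrix.fromBlocks E11 E12 E21 E22 := (Matrix.fromBlocks_toBlocks D).symm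
  rw [hD, hJ'] at h22
  simp only [Matrix.fromBlocks_multiply, Matrix.zero_mul, Matrix.mul_zero, add_zero, zero_add,
    Matrix.fromBlocks_neg] at h22
  obtain ⟨e11, e12, e21, e22⟩ := Matrix.fromBlocks_inj.mp h22
  have hE11 : E11 = 0 := aux_sylvester J1 hs1 E11 e11
  have hE22 : E22 = 0 := aux_sylvester J2 hs2 E22 e22
  rw [hD, hJ', hE11, hE22] at y22
  simp only [Matrix.fromBlocks_multiply, Matrix.zero_mul, Matrix.mul_zero, add_zero, zero_add] at y22
  obtain ⟨-, z12, z21, -⟩ := Matrix.fromBlocks_inj.mp y22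
  have hE12 : E12 = 0 := aux_unit_cancel J1 J2 E12 hJ1 hJ2 z12
  have hE21 : E21 = 0 := aux_unit_cancel J2 J1 E21 hJ2 hJ1 z21
  have hD0 : D = 0 := by rw [hD, hE11, hE12, hE21, hE22, Matrix.fromBlocks_zero]
  -- final A equations
  have hkey : A * (A * J0) = A * J0 * J0 := by
    have k1 : J0 * A * J0 = -(A * J0 * J0) := by rw [h11, neg_mul]
    have k2 : A * J0 * A = -(A * (A * J0)) := by rw [mul_assoc, h11, mul_neg]
    rw [k1, k2] at y11
    exact (neg_inj.mp y11).symm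
  refine ⟨?_, ?_, ?_, h11, ?_⟩
  · exact fun a b => congrFun (congrFun hB a) b
  · exact fun a b => congrFun (congrFun hC a) b
  · exact fun a b => congrFun (congrFun hD0 a) b
  · show A * (A - J0) * J0 = 0
    calc A * (A - J0) * J0 = A * A * J0 - A * J0 * J0 := by noncomm_ring
      _ = 0 := by rw [mul_assoc A A J0, hkey, sub_self]
end
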